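/- Let (Q, 𝔪, k) be a local Artinian ring with 𝔪³ = 0 whose Hilbert series is 1 + et + (e-1)t², and let f ∈ Q satisfy f² = 0 and f𝔪 = 𝔪². Then ℓ(ann_Q(f)) = e and ℓ((f)) = e, so ann_Q(f) = (f). -/

import Mathlib

open IsLocalRing

/-- The length of a module, defined as the Krull dimension of its lattice of submodules. -/
noncomputable def moduleLength (Q M : Type) [CommRing Q] [AddCommGroup M] [Module Q M] : ℕ∞ :=
  WithBot.unbotD 0 (Order.krullDim (Submodule Q M))

/-- The `n`-th coefficient of the Hilbert series of a local ring `Q`,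
namely `dim_k (𝔪ⁿ/𝔪ⁿ⁺¹)`, computed as the length over `Q` of `𝔪ⁿ/𝔪ⁿ⁺¹`. -/
noncomputable def hilbCoeff (Q : Type) [CommRing Q] [IsLocalRing Q] (n : ℕ) : ℕ∞ :=
  moduleLength Q
    (↥(maximalIdeal Q ^ n) ⧸
      (Submodule.comap (maximalIdeal Q ^ n).subtype (maximalIdeal Q ^ (n + 1))))

/-!
The Hilbert series gives `ℓ(Q) = 1 + e + (e - 1) = 2e` and `ℓ(𝔪²) = e - 1`. Since `f ∉ 𝔪²`
(otherwise `𝔪² = f𝔪 ⊆ 𝔪³ = 0`), multiplication by `f` identifies `(f)/f𝔪 = (f)/𝔪²` with the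
residue field, so `ℓ((f)) = e`. As `Q/ann(f) ≅ (f)`, also `ℓ(ann(f)) = 2e - e = e`; finally
`f² = 0` gives `(f) ⊆ ann(f)`, and an inclusion of modules of the same finite length is an
equality.
-/

open Module

lemma moduleLength_eq_length (Q M : Type) [CommRing Q] [AddCommGroup M] [Module Q M] :
    moduleLength Q M = length Q M := by
  rw [moduleLength, ← coe_length, WithBot.unbotD_coe]

namespace Submodule

variable {R M : Type*} [Ring R] [AddCommGroup M] [Module R M]

lemma length_eq_length_add_length_quotient (N : Submodule R M) :
    length R M = length R N + length R (M ⧸ N) :=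
  length_eq_add_of_exact N.subtype N.mkQ N.injective_subtype N.mkQ_surjective
    (LinearMap.exact_subtype_mkQ N)

lemma length_eq_length_add_length_quotient_of_le {N P : Submodule R M} (h : N ≤ P) :
    length R P = length R N + length R (P ⧸ N.comap P.subtype) := by
  rw [(N.comap P.subtype).length_eq_length_add_length_quotient,
    (comapSubtypeEquivOfLe h).length_eq]

lemma eq_of_le_of_length_eq {N P : Submodule R M} (hle : N ≤ P)
    (h : length R N = length R P) (hP : length R P ≠ ⊤) : N = P := by
  have hquot : length R (P ⧸ N.comap P.subtype) = 0 := by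
    have hsum := length_eq_length_add_length_quotient_of_le hle
    rw [← h] at hP hsum
    exact WithTop.add_left_cancel hP (hsum.symm.trans (add_zero _).symm)
  have hPN := length_eq_zero_iff.mp hquot
  rw [Quotient.subsingleton_iff, comap_subtype_eq_top] at hPN
  exact le_antisymm hle hPN

end Submodule

namespace Ideal

variable {Q : Type*} [CommRing Q]

lemma span_singleton_le_annihilator_of_sq_eq_zero {f : Q} (hf : f ^ 2 = 0) :
    span {f} ≤ (span {f} : Submodule Q Q).annihilator := by
  rw [span_singleton_le_iff_mem, Submodule.mem_annihilator_span_singleton, smul_eq_mul, ← sq, hf]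

lemma length_eq_length_annihilator_add_length_span_singleton (f : Q) :
    length Q Q = length Q ↥((span {f} : Submodule Q Q).annihilator) + length Q ↥(span {f}) := by
  rw [Submodule.length_eq_length_add_length_quotient (span {f} : Submodule Q Q).annihilator,
    annihilator_span_singleton_eq_torsionOf, (quotTorsionOfEquivSpanSingleton Q Q f).length_eq]

end Ideal

namespace IsLocalRing

variable {Q : Type} [CommRing Q] [IsLocalRing Q]

lemma length_quotient_maximalIdeal : length Q (Q ⧸ maximalIdeal Q) = 1 :=
  have := isSimpleModule_iff_isCoatom.mpr (maximalIdeal.isMaximal Q).out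
  length_eq_one _ _

lemma length_eq_length_maximalIdeal_add_one : length Q Q = length Q (maximalIdeal Q) + 1 := by
  rw [(maximalIdeal Q).length_eq_length_add_length_quotient, length_quotient_maximalIdeal]

lemma length_maximalIdeal_pow_eq_add_hilbCoeff (n : ℕ) :
    length Q ↥(maximalIdeal Q ^ n) = length Q ↥(maximalIdeal Q ^ (n + 1)) + hilbCoeff Q n := by
  rw [hilbCoeff, moduleLength_eq_length]
  exact Submodule.length_eq_length_add_length_quotient_of_le (Ideal.pow_le_pow_right n.le_succ)

lemma hilbCoeff_eq_length_of_pow_succ_eq_bot {n : ℕ} (h : maximalIdeal Q ^ (n + 1) = ⊥) :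
    hilbCoeff Q n = length Q ↥(maximalIdeal Q ^ n) := by
  rw [length_maximalIdeal_pow_eq_add_hilbCoeff, h, length_bot, zero_add]

lemma hilbCoeff_ne_zero_of_mem_of_notMem {n : ℕ} {x : Q} (hx : x ∈ maximalIdeal Q ^ n)
    (hx' : x ∉ maximalIdeal Q ^ (n + 1)) : hilbCoeff Q n ≠ 0 := by
  rw [hilbCoeff, moduleLength_eq_length, Ne, length_eq_zero_iff,
    Submodule.Quotient.subsingleton_iff, Submodule.comap_subtype_eq_top]
  exact fun h => hx' (h hx)

lemma length_span_singleton_eq_length_mul_maximalIdeal_add_one {f : Q}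
    (hf : f ∉ Ideal.span {f} * maximalIdeal Q) :
    length Q ↥(Ideal.span {f}) = length Q ↥(Ideal.span {f} * maximalIdeal Q) + 1 := by
  set S := Ideal.span {f}
  let χ : Q →ₗ[Q] S ⧸ Submodule.comap S.subtype (S * maximalIdeal Q) :=
    (Submodule.mkQ _).comp (LinearMap.toSpanSingleton Q S ⟨f, Ideal.mem_span_singleton_self f⟩)
  have hχ : Function.Surjective χ := by
    rintro ⟨⟨y, hy⟩⟩
    obtain ⟨x, rfl⟩ := Ideal.mem_span_singleton'.mp hy
    exact ⟨x, rfl⟩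
  have mem_ker : ∀ x, x ∈ LinearMap.ker χ ↔ x * f ∈ S * maximalIdeal Q := fun _ =>
    Submodule.Quotient.mk_eq_zero _
  have hker : LinearMap.ker χ = maximalIdeal Q := by
    refine le_antisymm (le_maximalIdeal fun htop => hf ?_) fun x hx => ?_
    · simpa using (mem_ker 1).mp (htop ▸ Submodule.mem_top)
    · rw [mem_ker, mul_comm x f]
      exact Ideal.mul_mem_mul (Ideal.mem_span_singleton_self f) hx
  have hquot : length Q (S ⧸ Submodule.comap S.subtype (S * maximalIdeal Q)) = 1 := by
    rw [← (χ.quotKerEquivOfSurjective hχ).length_eq, hker, length_quotient_maximalIdeal]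
  rw [Submodule.length_eq_length_add_length_quotient_of_le Ideal.mul_le_left, hquot]

lemma notMem_maximalIdeal_sq_of_span_mul_maximalIdeal_eq {f : Q} (hf : f ≠ 0)
    (h3 : maximalIdeal Q ^ 3 = ⊥) (hfm : Ideal.span {f} * maximalIdeal Q = maximalIdeal Q ^ 2) :
    f ∉ maximalIdeal Q ^ 2 := by
  intro hf_sq
  have hsq_bot : maximalIdeal Q ^ 2 ≤ ⊥ :=
    calc maximalIdeal Q ^ 2 = Ideal.span {f} * maximalIdeal Q := hfm.symm
      _ ≤ maximalIdeal Q ^ 2 * maximalIdeal Q :=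
        Ideal.mul_mono_left ((Ideal.span_singleton_le_iff_mem _).mpr hf_sq)
      _ = ⊥ := by rw [← pow_succ, h3]
  exact hf ((Submodule.mem_bot Q).mp (hsq_bot hf_sq))

end IsLocalRing

theorem ann_eq_span_of_conca_generator_general
    (Q : Type) [CommRing Q] [IsLocalRing Q]
    (h3 : maximalIdeal Q ^ 3 = ⊥)
    (e : ℕ) (he : hilbCoeff Q 1 = e) (h2 : hilbCoeff Q 2 = ((e - 1 : ℕ) : ℕ∞))
    (f : Q) (hf : f ≠ 0) (hf2 : f ^ 2 = 0)
    (hfm : Ideal.span {f} * maximalIdeal Q = maximalIdeal Q ^ 2) :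
    moduleLength Q ↥((Ideal.span {f} : Submodule Q Q).annihilator) = (e : ℕ∞) ∧
      moduleLength Q ↥(Ideal.span {f}) = (e : ℕ∞) ∧
      (Ideal.span {f} : Submodule Q Q).annihilator = Ideal.span {f} := by
  have hf_mem : f ∈ maximalIdeal Q :=
    (maximalIdeal.isMaximal Q).isPrime.mem_of_pow_mem 2 (hf2 ▸ zero_mem _)
  have hf_notMem := notMem_maximalIdeal_sq_of_span_mul_maximalIdeal_eq hf h3 hfm
  have he0 : e ≠ 0 := by
    rintro rfl
    exact hilbCoeff_ne_zero_of_mem_of_notMem (by rwa [pow_one]) hf_notMem he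
  have hsq : length Q ↥(maximalIdeal Q ^ 2) = (e - 1 : ℕ) :=
    (hilbCoeff_eq_length_of_pow_succ_eq_bot h3).symm.trans h2
  have hQ : length Q Q = e + e := by
    have hm := length_maximalIdeal_pow_eq_add_hilbCoeff (Q := Q) 1
    simp only [Nat.reduceAdd, he, hsq] at hm
    rw [length_eq_length_maximalIdeal_add_one, ← pow_one (maximalIdeal Q), hm]
    norm_cast
    omega
  have hS : length Q ↥(Ideal.span {f}) = e := by
    rw [length_span_singleton_eq_length_mul_maximalIdeal_add_one (hfm ▸ hf_notMem), hfm, hsq]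
    norm_cast
    omega
  have hA : length Q ↥((Ideal.span {f} : Submodule Q Q).annihilator) = e := by
    have hsum := Ideal.length_eq_length_annihilator_add_length_span_singleton f
    rw [hQ, hS] at hsum
    exact (WithTop.add_right_cancel (ENat.natCast_ne_top e) hsum).symm
  rw [moduleLength_eq_length, moduleLength_eq_length]
  exact ⟨hA, hS, (Submodule.eq_of_le_of_length_eq
    (Ideal.span_singleton_le_annihilator_of_sq_eq_zero hf2) (hS.trans hA.symm) (by simp [hA])).symm⟩

/-- Let `(Q,𝔪,k)` be a local Artinian ring with `𝔪³ = 0` and Hilbert series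
`1 + e t + (e-1) t²`, and let `f` be a nonzero element with `f² = 0` and `f𝔪 = 𝔪²`
(a Conca generator).  Then `ℓ(ann_Q(f)) = e` and `ℓ((f)) = e`; consequently
`ann_Q(f) = (f)`. -/
theorem ann_eq_span_of_conca_generator
    (Q : Type) [CommRing Q] [IsLocalRing Q] [IsArtinianRing Q]
    (h3 : maximalIdeal Q ^ 3 = ⊥)
    (e : ℕ) (he : hilbCoeff Q 1 = e) (h2 : hilbCoeff Q 2 = ((e - 1 : ℕ) : ℕ∞))
    (f : Q) (hf : f ≠ 0) (hf2 : f ^ 2 = 0)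
    (hfm : Ideal.span {f} * maximalIdeal Q = maximalIdeal Q ^ 2) :
    moduleLength Q ↥((Ideal.span {f} : Submodule Q Q).annihilator) = (e : ℕ∞) ∧
      moduleLength Q ↥(Ideal.span {f}) = (e : ℕ∞) ∧
      (Ideal.span {f} : Submodule Q Q).annihilator = Ideal.span {f} :=
  ann_eq_span_of_conca_generator_general Q h3 e he h2 f hf hf2 hfm
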